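/- arXiv:1407.2629 — 3 statements merged into one kernel-verified Lean document; each statement's English description precedes it below -/
import Mathlib

section
/- Let L be an abelian group, let A and C be commutative rings graded by L, and let f : A → C be a graded ring homomorphism (f(A_l) ⊆ C_l for all l). Assume that C is generated as an A-algebra by elements of degree 0, i.e. by a subset of C₀. Then for every l ∈ L, every element of C_l is a finite sum of products f(a)·c with a ∈ A_l and c ∈ C₀; in particular, the ideal of C generated by C_l equals the ideal generated by f(A_l). -/
/-- Let `L` be an abelian group, `A` and `C` commutative rings graded by
`L`, and `f : A →+* C` a graded ring homomorphism.  Assume `C` is generated as an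
`A`-algebra by a set of elements of degree `0`, i.e. there is `s ⊆ C₀` with the subring of
`C` generated by `f(A) ∪ s` being all of `C`.  Then for every `l ∈ L`, every element of
`C_l` is a finite sum of products `f(a)·c` with `a ∈ A_l` and `c ∈ C₀`; in particular the
ideal of `C` generated by `C_l` equals the ideal generated by `f(A_l)`. -/
theorem statement15 {L A C : Type*} [AddCommGroup L] [DecidableEq L]
    [CommRing A] [CommRing C]
    (𝒜 : L → AddSubgroup A) (𝒞 : L → AddSubgroup C) [GradedRing 𝒜] [GradedRing 𝒞]
    (f : A →+* C) (hf : ∀ l : L, ∀ a ∈ 𝒜 l, f a ∈ 𝒞 l)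
    (hgen : ∃ s : Set C, s ⊆ (𝒞 (0 : L) : Set C) ∧
      Subring.closure (Set.range f ∪ s) = ⊤) :
    (∀ l : L, ∀ x ∈ 𝒞 l,
      x ∈ AddSubmonoid.closure {z : C | ∃ a ∈ 𝒜 l, ∃ c ∈ 𝒞 (0 : L), z = f a * c}) ∧
    (∀ l : L, Ideal.span ((𝒞 l : Set C)) = Ideal.span (f '' (𝒜 l : Set A))) := by
  classical
  obtain ⟨s, hs0, hs⟩ := hgen
  set M : L → AddSubmonoid C := fun l =>
    AddSubmonoid.closure {z : C | ∃ a ∈ 𝒜 l, ∃ c ∈ 𝒞 (0 : L), z = f a * c} with hM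
  have hmem : ∀ l : L, ∀ a ∈ 𝒜 l, ∀ c ∈ 𝒞 (0 : L), f a * c ∈ M l := fun l a ha c hc =>
    AddSubmonoid.subset_closure ⟨a, ha, c, hc, rfl⟩
  have hmul : ∀ (k m : L) (x y : C), x ∈ M k → y ∈ M m → x * y ∈ M (k + m) := by
    intro k m x y hx hy
    induction hx using AddSubmonoid.closure_induction with
    | mem x hxg =>
      obtain ⟨a, ha, c, hc, rfl⟩ := hxg
      induction hy using AddSubmonoid.closure_induction with
      | mem y hyg =>
        obtain ⟨a', ha', c', hc', rfl⟩ := hyg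
        have : f a * c * (f a' * c') = f (a * a') * (c * c') := by
          rw [map_mul]; ring
        rw [this]
        exact hmem _ _ (SetLike.mul_mem_graded ha ha') _
          (by simpa using SetLike.mul_mem_graded hc hc')
      | zero => rw [mul_zero]; exact zero_mem _
      | add y z _ _ hy hz => rw [mul_add]; exact add_mem hy hz
    | zero => rw [zero_mul]; exact zero_mem _
    | add x z _ _ hx' hz' => rw [add_mul]; exact add_mem hx' hz'
  have key : ∀ x : C, ∀ l : L, ↑(DirectSum.decompose 𝒞 x l) ∈ M l := by
    intro x l
    have hx : x ∈ Subring.closure (Set.range f ∪ s) := hs ▸ Subring.mem_top x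
    induction hx using Subring.closure_induction generalizing l with
    | mem x hxg =>
      rcases hxg with ⟨a, rfl⟩ | hxs
      · -- x = f a
        have h1 : f a = ∑ k ∈ (DirectSum.decompose 𝒜 a).support,
            f (DirectSum.decompose 𝒜 a k) := by
          conv_lhs => rw [← DirectSum.sum_support_decompose 𝒜 a]
          rw [map_sum]
        rw [h1, DirectSum.decompose_sum]
        rw [DFinsupp.finset_sum_apply, AddSubmonoidClass.coe_finset_sum]
        refine AddSubmonoid.sum_mem _ fun k _ => ?_
        by_cases hkl : k = l
        · subst hkl
          rw [DirectSum.decompose_of_mem_same 𝒞 (hf k _ (SetLike.coe_mem _))]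
          have : f ↑(DirectSum.decompose 𝒜 a k) =
              f ↑(DirectSum.decompose 𝒜 a k) * 1 := by ring
          rw [this]
          exact hmem _ _ (SetLike.coe_mem _) _ (SetLike.one_mem_graded 𝒞)
        · rw [DirectSum.decompose_of_mem_ne 𝒞 (hf k _ (SetLike.coe_mem _)) hkl]
          exact zero_mem _
      · -- x ∈ s
        by_cases hl : (0 : L) = l
        · subst hl
          rw [DirectSum.decompose_of_mem_same 𝒞 (hs0 hxs)]
          have : x = f 1 * x := by simp
          rw [this]
          exact hmem _ _ (SetLike.one_mem_graded 𝒜) _ (hs0 hxs)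
        · rw [DirectSum.decompose_of_mem_ne 𝒞 (hs0 hxs) hl]
          exact zero_mem _
    | zero =>
      simp only [DirectSum.decompose_zero, DirectSum.zero_apply, ZeroMemClass.coe_zero]
      exact zero_mem _
    | one =>
      by_cases hl : (0 : L) = l
      · subst hl
        rw [DirectSum.decompose_of_mem_same 𝒞 (SetLike.one_mem_graded 𝒞)]
        have : (1 : C) = f 1 * 1 := by simp
        rw [this]
        exact hmem _ _ (SetLike.one_mem_graded 𝒜) _ (SetLike.one_mem_graded 𝒞)
      · rw [DirectSum.decompose_of_mem_ne 𝒞 (SetLike.one_mem_graded 𝒞) hl]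
        exact zero_mem _
    | add x y _ _ hx hy =>
      rw [DirectSum.decompose_add, DirectSum.add_apply, AddSubgroup.coe_add]
      exact add_mem (hx l) (hy l)
    | neg x _ hx =>
      rw [DirectSum.decompose_neg, DFinsupp.neg_apply, AddSubgroup.coe_neg]
      -- M l is closed under negation since generators are
      have hneg : ∀ z ∈ M l, -z ∈ M l := by
        intro z hz
        induction hz using AddSubmonoid.closure_induction with
        | mem z hzg =>
          obtain ⟨a, ha, c, hc, rfl⟩ := hzg
          have : -(f a * c) = f (-a) * c := by rw [map_neg]; ring
          rw [this]
          exact hmem _ _ (neg_mem ha) _ hc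
        | zero => simpa using zero_mem (M l)
        | add z w _ _ hz hw => rw [neg_add]; exact add_mem hz hw
      exact hneg _ (hx l)
    | mul x y _ _ hx hy =>
      rw [DirectSum.decompose_mul, DirectSum.coe_mul_apply]
      refine AddSubmonoid.sum_mem _ fun ij hij => ?_
      obtain ⟨-, h⟩ := Finset.mem_filter.mp hij
      exact h ▸ hmul _ _ _ _ (hx ij.1) (hy ij.2)
  have part1 : ∀ l : L, ∀ x ∈ 𝒞 l, x ∈ M l := by
    intro l x hx
    have := key x l
    rwa [DirectSum.decompose_of_mem_same 𝒞 hx] at this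
  refine ⟨part1, fun l => le_antisymm ?_ ?_⟩
  · rw [Ideal.span_le]
    intro x hx
    have hx' := part1 l x hx
    clear hx
    induction hx' using AddSubmonoid.closure_induction with
    | mem z hzg =>
      obtain ⟨a, ha, c, hc, rfl⟩ := hzg
      exact Ideal.mul_mem_right _ _ (Ideal.subset_span ⟨a, ha, rfl⟩)
    | zero => exact zero_mem _
    | add z w _ _ hz hw => exact add_mem hz hw
  · rw [Ideal.span_le]
    rintro _ ⟨a, ha, rfl⟩
    exact Ideal.subset_span (hf l a ha)
end

section
/- Let R be a commutative ring, M a commutative monoid (written additively), p ⊆ M a prime ideal, and F = M ∖ p the complementary face (a submonoid of M). Then the quotient of the monoid algebra R[M] (AddMonoidAlgebra R M) by the ideal generated by the monomials {z^a : a ∈ p} is isomorphic, as an R-algebra, to the monoid algebra R[F]. -/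
/-- An ideal of a commutative monoid `M`: a subset `I` with `I + M ⊆ I`. -/
def IsIdealAbs {M : Type*} [AddCommMonoid M] (I : Set M) : Prop :=
  ∀ i ∈ I, ∀ m : M, i + m ∈ I

/-- A prime ideal of `M`: an ideal `p ≠ M` such that `x + y ∈ p` implies `x ∈ p` or
`y ∈ p`; the empty set counts as a prime ideal. -/
def IsPrimeIdealAbs {M : Type*} [AddCommMonoid M] (p : Set M) : Prop :=
  IsIdealAbs p ∧ p ≠ Set.univ ∧ ∀ x y : M, x + y ∈ p → x ∈ p ∨ y ∈ p

/-- Let `R` be a commutative ring, `M` a commutative monoid, `p ⊆ M` a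
prime ideal and `F = M ∖ p` the complementary face (a submonoid).  Then the quotient of the
monoid algebra `R[M]` by the ideal generated by the monomials `z^a`, `a ∈ p`, is isomorphic
as an `R`-algebra to the monoid algebra `R[F]`. -/
theorem statement18 {R : Type*} [CommRing R] {M : Type*} [AddCommMonoid M]
    (p : Set M) (hp : IsPrimeIdealAbs p)
    (F : AddSubmonoid M) (hF : (F : Set M) = {x : M | x ∉ p}) :
    Nonempty ((AddMonoidAlgebra R M ⧸
        Ideal.span ((fun a : M => (AddMonoidAlgebra.single a 1 : AddMonoidAlgebra R M)) '' p))
      ≃ₐ[R] AddMonoidAlgebra R F) := by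
  classical
  obtain ⟨hideal, hne, hprime⟩ := hp
  have hmemF : ∀ {a : M}, a ∉ p → a ∈ F := fun {a} ha => by
    rw [← SetLike.mem_coe, hF]; exact ha
  have h0 : (0 : M) ∉ p := by
    intro h0
    apply hne
    ext m
    simp only [Set.mem_univ, iff_true]
    simpa using hideal 0 h0 m
  -- the multiplicative map M → R[F]
  set g : Multiplicative M →* AddMonoidAlgebra R F :=
    { toFun := fun a =>
        if h : a.toAdd ∈ p then 0
        else AddMonoidAlgebra.single (⟨a.toAdd, hmemF h⟩ : F) 1
      map_one' := by
        simp only [toAdd_one]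
        rw [dif_neg h0]
        rfl
      map_mul' := by
        intro a b
        simp only [toAdd_mul]
        by_cases hab : a.toAdd + b.toAdd ∈ p
        · rw [dif_pos hab]
          rcases hprime _ _ hab with h | h
          · rw [dif_pos h, zero_mul]
          · rw [dif_pos h, mul_zero]
        · have ha : a.toAdd ∉ p := fun h => hab (hideal _ h _)
          have hb : b.toAdd ∉ p := fun h => hab (by simpa [add_comm] using hideal _ h a.toAdd)
          rw [dif_neg hab, dif_neg ha, dif_neg hb,
            AddMonoidAlgebra.single_mul_single, one_mul]
          rfl }
  set φ : AddMonoidAlgebra R M →ₐ[R] AddMonoidAlgebra R F :=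
    AddMonoidAlgebra.lift R (AddMonoidAlgebra R F) M g with hφ
  have hφ_single : ∀ (a : M) (r : R),
      φ (AddMonoidAlgebra.single a r) =
        if h : a ∈ p then 0 else AddMonoidAlgebra.single (⟨a, hmemF h⟩ : F) r := by
    intro a r
    rw [hφ, AddMonoidAlgebra.lift_single]
    by_cases h : a ∈ p
    · simp only [g, MonoidHom.coe_mk, OneHom.coe_mk]
      rw [dif_pos h, dif_pos (show (Multiplicative.ofAdd a).toAdd ∈ p from h), smul_zero]
    · simp only [g, MonoidHom.coe_mk, OneHom.coe_mk]
      rw [dif_neg h, dif_neg (show (Multiplicative.ofAdd a).toAdd ∉ p from h)]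
      rw [AddMonoidAlgebra.smul_single', mul_one]
      rfl
  -- the section R[F] → R[M]
  set ψ : AddMonoidAlgebra R F →ₐ[R] AddMonoidAlgebra R M :=
    AddMonoidAlgebra.mapDomainAlgHom R R F.subtype with hψ
  have hψ_single : ∀ (a : F) (r : R),
      ψ (AddMonoidAlgebra.single a r) = AddMonoidAlgebra.single (a : M) r := by
    intro a r
    rw [hψ]
    rw [AddMonoidAlgebra.mapDomainAlgHom_apply]
    exact AddMonoidAlgebra.mapDomain_single
  -- surjectivity of φ
  have hsurj : Function.Surjective φ := by
    intro y
    refine ⟨ψ y, ?_⟩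
    induction y using AddMonoidAlgebra.induction_linear with
    | zero => simp
    | add x y hx hy => rw [map_add, map_add, hx, hy]
    | single a r =>
      rw [hψ_single, hφ_single]
      have ha : (a : M) ∉ p := by
        have := a.2
        rw [← SetLike.mem_coe, hF] at this
        exact this
      rw [dif_neg ha]
  -- kernel computation
  have hker : RingHom.ker φ =
      Ideal.span ((fun a : M => (AddMonoidAlgebra.single a 1 : AddMonoidAlgebra R M)) '' p) := by
    apply le_antisymm
    · intro x hx
      rw [RingHom.mem_ker] at hx
      -- split x into the part supported in p and the part outside
      have hxsplit := Finsupp.filter_pos_add_filter_neg x.coeff (fun a => a ∈ p)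
      set xp : AddMonoidAlgebra R M := AddMonoidAlgebra.ofCoeff (Finsupp.filter (fun a => a ∈ p) x.coeff) with hxp
      set xf : AddMonoidAlgebra R M := AddMonoidAlgebra.ofCoeff (Finsupp.filter (fun a => a ∉ p) x.coeff) with hxf
      have hsplit : xp + xf = x := congrArg AddMonoidAlgebra.ofCoeff hxsplit
      have hxp_mem : xp ∈ Ideal.span
          ((fun a : M => (AddMonoidAlgebra.single a 1 : AddMonoidAlgebra R M)) '' p) := by
        have : xp = xp.coeff.sum fun a r => (AddMonoidAlgebra.single a r : AddMonoidAlgebra R M) :=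
          (AddMonoidAlgebra.sum_coeff_single xp).symm
        rw [this]
        apply Ideal.sum_mem
        intro a ha
        rw [hxp, AddMonoidAlgebra.coeff_ofCoeff, Finsupp.support_filter, Finset.mem_filter] at ha
        have hap : a ∈ p := ha.2
        have : (AddMonoidAlgebra.single a (xp.coeff a) : AddMonoidAlgebra R M) =
            AddMonoidAlgebra.single 0 (xp.coeff a) * AddMonoidAlgebra.single a 1 := by
          rw [AddMonoidAlgebra.single_mul_single, zero_add, mul_one]
        show AddMonoidAlgebra.single a (xp.coeff a) ∈ _
        rw [this]
        exact Ideal.mul_mem_left _ _ (Ideal.subset_span ⟨a, hap, rfl⟩)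
      -- φ kills xp
      have hφxp : φ xp = 0 := by
        rw [← AddMonoidAlgebra.sum_coeff_single xp, map_finsuppSum]
        apply Finset.sum_eq_zero
        intro a ha
        rw [hxp, AddMonoidAlgebra.coeff_ofCoeff, Finsupp.support_filter, Finset.mem_filter] at ha
        simp only [hφ_single]
        rw [dif_pos ha.2]
      have hφxf : φ xf = 0 := by
        have : φ xp + φ xf = 0 := by rw [← map_add, hsplit, hx]
        rwa [hφxp, zero_add] at this
      -- ψ ∘ φ fixes xf
      have hfix : ψ (φ xf) = xf := by
        rw [← AddMonoidAlgebra.sum_coeff_single xf, map_finsuppSum, map_finsuppSum]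
        apply Finset.sum_congr rfl
        intro a ha
        rw [hxf, AddMonoidAlgebra.coeff_ofCoeff, Finsupp.support_filter, Finset.mem_filter] at ha
        simp only [hφ_single]
        rw [dif_neg ha.2, hψ_single]
      have hxf0 : xf = 0 := by rw [← hfix, hφxf, map_zero]
      rw [← hsplit, hxf0, add_zero]
      exact hxp_mem
    · rw [Ideal.span_le]
      rintro _ ⟨a, hap, rfl⟩
      simp only [SetLike.mem_coe, RingHom.mem_ker]
      rw [hφ_single, dif_pos hap]
  exact ⟨hker ▸ Ideal.quotientKerAlgEquivOfSurjective hsurj⟩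
end

section
/- Let M be a toric monoid and p ⊆ M a prime ideal of M (possibly empty). Then the ideal of the monoid algebra ℤ[M] (AddMonoidAlgebra ℤ M) generated by the monomials {z^a : a ∈ p} is a prime ideal of ℤ[M]. -/
section Grothendieck

variable {M : Type*} [AddCommMonoid M] [IsCancelAdd M]

/-- The Grothendieck congruence on `M × M`. -/
def grCon (M : Type*) [AddCommMonoid M] [IsCancelAdd M] : AddCon (M × M) where
  r x y := x.1 + y.2 = y.1 + x.2
  iseqv := by
    refine ⟨fun x => rfl, fun h => h.symm, fun {x y z} hxy hyz => ?_⟩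
    have h : (x.1 + y.2) + (y.1 + z.2) = (y.1 + x.2) + (z.1 + y.2) := by rw [hxy, hyz]
    have h2 : (x.1 + z.2) + (y.1 + y.2) = (z.1 + x.2) + (y.1 + y.2) := by
      calc (x.1 + z.2) + (y.1 + y.2) = (x.1 + y.2) + (y.1 + z.2) := by abel
      _ = (y.1 + x.2) + (z.1 + y.2) := h
      _ = (z.1 + x.2) + (y.1 + y.2) := by abel
    exact add_right_cancel h2
  add' := by
    intro w x y z h1 h2
    show (w.1 + y.1) + (x.2 + z.2) = (x.1 + z.1) + (w.2 + y.2)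
    calc (w.1 + y.1) + (x.2 + z.2) = (w.1 + x.2) + (y.1 + z.2) := by abel
    _ = (x.1 + w.2) + (z.1 + y.2) := by rw [h1, h2]
    _ = (x.1 + z.1) + (w.2 + y.2) := by abel

lemma grCon_iff (x y : M × M) : grCon M x y ↔ x.1 + y.2 = y.1 + x.2 := Iff.rfl

/-- The Grothendieck group of `M` (as the congruence quotient). -/
instance grNeg : Neg ((grCon M).Quotient) :=
  ⟨Quotient.map Prod.swap (fun x y (h : grCon M x y) =>
    show grCon M x.swap y.swap by
      rw [grCon_iff] at h ⊢
      simp only [Prod.fst_swap, Prod.snd_swap]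
      exact (add_comm _ _).trans (h.symm.trans (add_comm _ _)))⟩

lemma grNeg_coe (x : M × M) : (-(x : (grCon M).Quotient)) = ((x.swap : M × M) : (grCon M).Quotient) := rfl

instance grGroup : AddCommGroup ((grCon M).Quotient) :=
  { (inferInstance : AddCommMonoid (grCon M).Quotient), (inferInstance : Neg (grCon M).Quotient) with
    zsmul := zsmulRec
    neg_add_cancel := fun a => by
      refine Quotient.inductionOn a (fun x => ?_)
      have h1 : (Quotient.mk _ x : (grCon M).Quotient) = (x : (grCon M).Quotient) := rfl
      rw [h1, grNeg_coe, ← AddCon.coe_add]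
      show ((x.swap + x : M × M) : (grCon M).Quotient) = ((0 : M × M) : (grCon M).Quotient)
      rw [AddCon.eq, grCon_iff]
      simp only [Prod.fst_add, Prod.snd_add, Prod.fst_swap, Prod.snd_swap, Prod.fst_zero,
        Prod.snd_zero]
      abel }

/-- The canonical map `M → Gr M`. -/
def grMk : M →+ (grCon M).Quotient := (grCon M).mk'.comp (AddMonoidHom.inl M M)

lemma grMk_coe (a : M) : grMk a = ((a, 0) : M × M) := rfl

lemma grMk_injective : Function.Injective (grMk (M := M)) := by
  intro a b h
  rw [grMk_coe, grMk_coe, AddCon.eq, grCon_iff] at h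
  simpa using h

lemma grMk_surj (g : (grCon M).Quotient) : ∃ x : M × M, g = grMk x.1 - grMk x.2 := by
  obtain ⟨x, rfl⟩ := Quotient.exists_rep g
  have h1 : (Quotient.mk _ x : (grCon M).Quotient) = (x : (grCon M).Quotient) := rfl
  refine ⟨x, ?_⟩
  rw [h1, eq_sub_iff_add_eq, grMk_coe, grMk_coe, ← AddCon.coe_add, AddCon.eq, grCon_iff]
  simp only [Prod.fst_add, Prod.snd_add]
  abel

lemma gr_torsionfree (htf : ∀ (n : ℕ), 0 < n → ∀ a b : M, n • a = n • b → a = b) :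
    NoZeroSMulDivisors ℤ ((grCon M).Quotient) := by
  constructor
  intro n g h
  by_cases hn : n = 0
  · exact Or.inl hn
  right
  obtain ⟨x, rfl⟩ := Quotient.exists_rep g
  have h1 : (Quotient.mk _ x : (grCon M).Quotient) = (x : (grCon M).Quotient) := rfl
  rw [h1] at h ⊢
  have hm : (n.natAbs : ℕ) • ((x : (grCon M).Quotient)) = 0 := by
    rcases Int.natAbs_eq n with he | he
    · rw [← natCast_zsmul, ← he, h]
    · rw [← natCast_zsmul, ← neg_neg ((n.natAbs : ℤ)), ← he, neg_zsmul, h, neg_zero]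
  have hm' : ((n.natAbs • x : M × M) : (grCon M).Quotient) = 0 :=
    ((map_nsmul (grCon M).mk' n.natAbs x).symm.trans hm : _)
  have hm2 : grCon M (n.natAbs • x) 0 := (AddCon.eq _).mp hm'
  rw [grCon_iff] at hm2
  have : n.natAbs • x.1 = n.natAbs • x.2 := by simpa using hm2
  have hx : x.1 = x.2 := htf n.natAbs (Int.natAbs_pos.mpr hn) _ _ this
  exact (AddCon.eq _).mpr (show grCon M x 0 from by
    rw [grCon_iff]; simp [hx, add_comm])

lemma gr_fg [AddMonoid.FG M] : Module.Finite ℤ ((grCon M).Quotient) := by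
  classical
  obtain ⟨S, hS⟩ := (AddMonoid.FG.fg_top : (⊤ : AddSubmonoid M).FG)
  refine ⟨⟨S.image (grMk (M := M)), ?_⟩⟩
  rw [eq_top_iff]
  rintro g -
  obtain ⟨x, rfl⟩ := grMk_surj g
  have key : ∀ a : M, grMk a ∈ Submodule.span ℤ (↑(S.image (grMk (M := M))) : Set _) := by
    intro a
    have ha : a ∈ AddSubmonoid.closure (S : Set M) := hS ▸ AddSubmonoid.mem_top a
    induction ha using AddSubmonoid.closure_induction with
    | mem b hb => exact Submodule.subset_span (by simpa using ⟨b, hb, rfl⟩)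
    | zero => rw [map_zero]; exact Submodule.zero_mem _
    | add b c _ _ hbmem hcmem => rw [map_add]; exact Submodule.add_mem _ hbmem hcmem
  exact Submodule.sub_mem _ (key x.1) (key x.2)

lemma uniqueSums_aux [AddMonoid.FG M]
    (htf : ∀ (n : ℕ), 0 < n → ∀ a b : M, n • a = n • b → a = b) : UniqueSums M := by
  haveI := gr_torsionfree (M := M) htf
  haveI := gr_fg (M := M)
  haveI : Module.Free ℤ ((grCon M).Quotient) := Module.free_of_finite_type_torsion_free'
  let b := Module.Free.chooseBasis ℤ ((grCon M).Quotient)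
  have h1 : UniqueSums ((grCon M).Quotient) :=
    UniqueSums.of_injective_addHom b.repr.toLinearMap.toAddMonoidHom.toAddHom
      b.repr.injective inferInstance
  exact UniqueSums.of_injective_addHom (grMk (M := M)).toAddHom grMk_injective h1

end Grothendieck

section Algebra
open Pointwise
variable {M : Type*} [AddCommMonoid M]

/-- The ideal of elements of `ℤ[M]` supported in `p`. -/
def suppIdeal (p : Set M) (hId : IsIdealAbs p) : Ideal (AddMonoidAlgebra ℤ M) where
  carrier := {f | (f.coeff.support : Set M) ⊆ p}
  zero_mem' := by simp
  add_mem' := by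
    classical
    intro f g hf hg a ha
    rcases Finset.mem_union.mp (Finsupp.support_add ha) with h | h
    · exact hf h
    · exact hg h
  smul_mem' := by
    classical
    intro r f hf a ha
    have h : a ∈ r.coeff.support + f.coeff.support :=
      AddMonoidAlgebra.support_coeff_mul_subset r f (by simpa [smul_eq_mul] using ha)
    obtain ⟨b, hb, c, hc, rfl⟩ := Finset.mem_add.mp h
    rw [add_comm]
    exact hId c (hf hc) b

lemma mem_suppIdeal_iff {p : Set M} {hId : IsIdealAbs p} {f : AddMonoidAlgebra ℤ M} :
    f ∈ suppIdeal p hId ↔ (f.coeff.support : Set M) ⊆ p := Iff.rfl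

lemma span_eq_suppIdeal (p : Set M) (hId : IsIdealAbs p) :
    Ideal.span ((fun a : M =>
        (AddMonoidAlgebra.single a 1 : AddMonoidAlgebra ℤ M)) '' p) = suppIdeal p hId := by
  apply le_antisymm
  · rw [Ideal.span_le]
    rintro _ ⟨a, ha, rfl⟩
    rw [SetLike.mem_coe, mem_suppIdeal_iff]
    intro b hb
    have := Finsupp.support_single_subset hb
    simp only [Finset.mem_singleton] at this
    exact this ▸ ha
  · intro f hf
    rw [mem_suppIdeal_iff] at hf
    have hrw : f = f.coeff.sum fun a c => AddMonoidAlgebra.single a c := (AddMonoidAlgebra.sum_coeff_single f).symm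
    rw [hrw]
    refine Ideal.sum_mem _ (fun a ha => ?_)
    show (AddMonoidAlgebra.single a (f.coeff a) : AddMonoidAlgebra ℤ M) ∈ _
    have h1 : (AddMonoidAlgebra.single a (f.coeff a) : AddMonoidAlgebra ℤ M)
        = AddMonoidAlgebra.single 0 (f.coeff a) * AddMonoidAlgebra.single a 1 := by
      rw [AddMonoidAlgebra.single_mul_single, zero_add, mul_one]
    rw [h1]
    exact Ideal.mul_mem_left _ _ (Ideal.subset_span ⟨a, hf ha, rfl⟩)

lemma suppIdeal_isPrime [IsCancelAdd M] [UniqueSums M] (p : Set M) (hp : IsPrimeIdealAbs p) :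
    (suppIdeal p hp.1).IsPrime := by
  classical
  obtain ⟨hId, hne, hPr⟩ := hp
  have h0 : (0 : M) ∉ p := by
    intro h0
    exact hne (Set.eq_univ_of_forall fun m => by simpa using hId 0 h0 m)
  constructor
  · intro htop
    have h1 : (1 : AddMonoidAlgebra ℤ M) ∈ suppIdeal p hId := htop ▸ Submodule.mem_top
    have h1' : ((1 : AddMonoidAlgebra ℤ M).coeff.support : Set M) ⊆ p := mem_suppIdeal_iff.mp h1
    have : (0 : M) ∈ p := h1' (by
      rw [AddMonoidAlgebra.one_def]
      simpa using Finsupp.single_mem_support_iff.mpr one_ne_zero)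
    exact h0 this
  · intro f g hfg
    by_contra hcon
    push_neg at hcon
    obtain ⟨hf, hg⟩ := hcon
    have hA : (f.coeff.support.filter (fun a => a ∉ p)).Nonempty := by
      rw [Finset.filter_nonempty_iff]
      simpa [suppIdeal, Set.subset_def] using hf
    have hB : (g.coeff.support.filter (fun a => a ∉ p)).Nonempty := by
      rw [Finset.filter_nonempty_iff]
      simpa [suppIdeal, Set.subset_def] using hg
    obtain ⟨a0, ha0, b0, hb0, hu⟩ := UniqueSums.uniqueAdd_of_nonempty hA hB
    rw [Finset.mem_filter] at ha0 hb0
    have hab : a0 + b0 ∉ p := fun h => (hPr a0 b0 h).elim ha0.2 hb0.2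
    have hu' : UniqueAdd f.coeff.support g.coeff.support a0 b0 := by
      intro a b ha hb heq
      have hap : a ∉ p := fun h => hab (heq ▸ hId a h b)
      have hbp : b ∉ p := fun h => hab (heq ▸ (add_comm a b ▸ hId b h a))
      exact hu (Finset.mem_filter.mpr ⟨ha, hap⟩) (Finset.mem_filter.mpr ⟨hb, hbp⟩) heq
    have hcoef : (f * g).coeff (a0 + b0) = f.coeff a0 * g.coeff b0 :=
      AddMonoidAlgebra.coeff_mul_add_of_uniqueAdd hu'
    have hne0 : (f * g).coeff (a0 + b0) ≠ 0 := by
      rw [hcoef]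
      exact mul_ne_zero (Finsupp.mem_support_iff.mp ha0.1) (Finsupp.mem_support_iff.mp hb0.1)
    have hfg' : (((f * g : AddMonoidAlgebra ℤ M)).coeff.support : Set M) ⊆ p := mem_suppIdeal_iff.mp hfg
    exact hab (hfg' (Finsupp.mem_support_iff.mpr hne0))

end Algebra

/-- Let `M` be a toric monoid: finitely generated, cancellative, with
torsion-free Grothendieck group (`n•a = n•b → a = b` for `n ≥ 1`) and saturated (expressed
intrinsically: if `n•a = n•b + c` for some `c ∈ M` and `n ≥ 1` then `a = b + d` for some
`d ∈ M`).  For any prime ideal `p ⊆ M` (possibly empty), the ideal of the monoid algebra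
`ℤ[M]` generated by the monomials `z^a`, `a ∈ p`, is a prime ideal of `ℤ[M]`. -/
theorem statement19 {M : Type*} [AddCommMonoid M] [IsCancelAdd M] [AddMonoid.FG M]
    (htf : ∀ (n : ℕ), 0 < n → ∀ a b : M, n • a = n • b → a = b)
    (hsat : ∀ (n : ℕ), 0 < n → ∀ a b : M, (∃ c : M, n • a = n • b + c) → ∃ d : M, a = b + d)
    (p : Set M) (hp : IsPrimeIdealAbs p) :
    (Ideal.span ((fun a : M =>
        (AddMonoidAlgebra.single a 1 : AddMonoidAlgebra ℤ M)) '' p)).IsPrime := by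
  haveI : UniqueSums M := uniqueSums_aux htf
  rw [span_eq_suppIdeal p hp.1]
  exact suppIdeal_isPrime p hp
end
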